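/- arXiv:1707.07013 — 2 statements merged into one kernel-verified Lean document; each statement's English description precedes it below -/
import Mathlib

section
/- Let z : Fin N → ℝ be a vector (N ≥ 2) with a unique maximal coordinate at index i, i.e., z j < z i for all j ≠ i. Then for any real k > 1, the softmax value at i strictly increases under scaling: exp(k·z i) / (∑ j, exp(k·z j)) > exp(z i) / (∑ j, exp(z j)). -/
open Real Finset

theorem softmax_scale_increases_at_strict_max
    (N : ℕ) (hN : 2 ≤ N) (z : Fin N → ℝ) (i : Fin N)
    (hmax : ∀ j, j ≠ i → z j < z i) (k : ℝ) (hk : 1 < k) :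
    Real.exp (k * z i) / (∑ j, Real.exp (k * z j)) >
      Real.exp (z i) / (∑ j, Real.exp (z j)) := by
  have hpos : ∀ c : ℝ, 0 < ∑ j, Real.exp (c * (z j - z i)) := by
    intro c
    exact Finset.sum_pos (fun j _ => Real.exp_pos _) ⟨i, Finset.mem_univ i⟩
  have key : ∀ c : ℝ, Real.exp (c * z i) / (∑ j, Real.exp (c * z j))
      = 1 / ∑ j, Real.exp (c * (z j - z i)) := by
    intro c
    have h1 : (∑ j, Real.exp (c * (z j - z i)))
        = (∑ j, Real.exp (c * z j)) * Real.exp (-(c * z i)) := by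
      rw [Finset.sum_mul]
      refine Finset.sum_congr rfl fun j _ => ?_
      rw [← Real.exp_add]; ring_nf
    rw [h1, one_div, mul_inv, Real.exp_neg, inv_inv]; ring
  have k1 := key 1
  simp only [one_mul] at k1
  rw [key k, k1, gt_iff_lt]
  have hp1 := hpos 1
  simp only [one_mul] at hp1
  refine div_lt_div_of_pos_left one_pos (hpos k) ?_
  refine Finset.sum_lt_sum (fun j _ => ?_) ?_
  · rcases eq_or_ne j i with rfl | hj
    · simp
    · have hneg : z j - z i < 0 := sub_neg.mpr (hmax j hj)
      have := mul_lt_mul_of_neg_right hk hneg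
      rw [one_mul] at this; exact Real.exp_le_exp.mpr this.le
  · obtain ⟨j, hj⟩ := Fintype.exists_ne_of_one_lt_card (by simp [Fintype.card_fin]; omega : 1 < Fintype.card (Fin N)) i
    refine ⟨j, Finset.mem_univ j, ?_⟩
    have hneg : z j - z i < 0 := sub_neg.mpr (hmax j hj)
    have := mul_lt_mul_of_neg_right hk hneg
    rw [one_mul] at this
    exact Real.exp_lt_exp.mpr this
end

section
/- Monotonicity of softmax at the maximum as a function of scale: let z : Fin N → ℝ have a unique maximal coordinate at i. Then the function k ↦ exp(k·z i)/(∑ j, exp(k·z j)) is strictly monotone increasing on (0, ∞). -/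
open Real

theorem softmax_at_max_strictMonoOn_scale
    (N : ℕ) (hN : 2 ≤ N) (z : Fin N → ℝ) (i : Fin N)
    (hmax : ∀ j, j ≠ i → z j < z i) :
    StrictMonoOn (fun k : ℝ => Real.exp (k * z i) / (∑ j, Real.exp (k * z j)))
      (Set.Ioi (0 : ℝ)) := by
  intro a ha b hb hab
  simp only [Set.mem_Ioi] at ha hb
  have hSa : (0 : ℝ) < ∑ j, Real.exp (a * z j) :=
    Finset.sum_pos (fun j _ => Real.exp_pos _) ⟨i, Finset.mem_univ i⟩
  have hSb : (0 : ℝ) < ∑ j, Real.exp (b * z j) :=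
    Finset.sum_pos (fun j _ => Real.exp_pos _) ⟨i, Finset.mem_univ i⟩
  simp only
  rw [div_lt_div_iff₀ hSa hSb, Finset.mul_sum, Finset.mul_sum]
  -- find j ≠ i
  obtain ⟨j0, hj0⟩ : ∃ j0 : Fin N, j0 ≠ i := by
    have : Nontrivial (Fin N) := Fin.nontrivial_iff_two_le.mpr hN
    rcases exists_ne i with ⟨j0, hj0⟩
    exact ⟨j0, hj0⟩
  have key : ∀ j : Fin N, j ≠ i →
      Real.exp (a * z i) * Real.exp (b * z j) <
        Real.exp (b * z i) * Real.exp (a * z j) := by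
    intro j hj
    rw [← Real.exp_add, ← Real.exp_add]
    apply Real.exp_lt_exp.mpr
    have hz := hmax j hj
    nlinarith [sub_pos.mpr hab, sub_pos.mpr hz]
  refine Finset.sum_lt_sum (fun j _ => ?_) ⟨j0, Finset.mem_univ j0, key j0 hj0⟩
  by_cases h : j = i
  · subst h; ring_nf; exact le_of_eq (by ring_nf)
  · exact (key j h).le
end
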